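/- arXiv:2309.01725 — 2 statements merged into one kernel-verified Lean document; each statement's English description precedes it below -/
import Mathlib

section
/- For lattice paths in the type B_n digraph: if X = (a,b) lies strictly below the line x − y = 2n then the number of directed paths from X to the final vertex F = (1,2n) equals the sum over i from a to min(n, 2n−b) of [binomial(2n−a−b, 2n−i−b) − binomial(2n−a−b, 2n−i−a+1)], i.e., the total count of weakly-above-diagonal north-east lattice paths from (a,b) to the diagonal points (i, 2n−i) for i = 0,…,n. -/
/-- A north-east unit step in the integer lattice. -/
def NEStep (p q : ℤ × ℤ) : Prop :=
  q = (p.1 + 1, p.2) ∨ q = (p.1, p.2 + 1)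

/-- A north-east lattice path from `a` to `b` staying weakly above the diagonal `x = y`,
represented as its (nonempty) list of lattice points. -/
def IsNEPathAbove (a b : ℤ × ℤ) (l : List (ℤ × ℤ)) : Prop :=
  l.head? = some a ∧ l.getLast? = some b ∧ l.Chain' NEStep ∧ ∀ p ∈ l, p.1 ≤ p.2

/-- The number of north-east lattice paths from `a` to `b` weakly above the diagonal. -/
noncomputable def latticeCount (a b : ℤ × ℤ) : ℕ :=
  Set.ncard {l : List (ℤ × ℤ) | IsNEPathAbove a b l}

/-- The binomial coefficient `C(n, k)` for integers, equal to `0` if `k < 0` or `k > n`. -/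
def intChoose (n k : ℤ) : ℕ :=
  if 0 ≤ k ∧ k ≤ n then n.toNat.choose k.toNat else 0

/-!
Removing the first point of a path that does not end where it starts leaves a path from the
east or the north neighbour of the start, so the count obeys Pascal's recurrence in the start
point. The reflection-principle expression `C(m, c - a₁) - C(m, c - a₂ - 1)`, with `m` the number
of steps to `(c, d)`, obeys the same recurrence and vanishes for starts just below the diagonal
(`a₁ = a₂ + 1`), where there are no paths either; so the diagonal constraint needs no separate
treatment in the induction. Summing over the endpoints `(i, 2n - i)` and dropping the unreachable
ones gives the theorem.
-/

def nePathsAbove (a b : ℤ × ℤ) : Set (List (ℤ × ℤ)) := {l | IsNEPathAbove a b l}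

section

variable {a b x : ℤ × ℤ} {l : List (ℤ × ℤ)}

lemma isNEPathAbove_iff : IsNEPathAbove a b l ↔
    l.head? = some a ∧ l.getLast? = some b ∧ l.IsChain NEStep ∧ ∀ p ∈ l, p.1 ≤ p.2 :=
  Iff.rfl

lemma isNEPathAbove_cons :
    IsNEPathAbove a b (x :: l) ↔
      x = a ∧ a.1 ≤ a.2 ∧ (l = [] ∧ b = a ∨ ∃ y, NEStep a y ∧ IsNEPathAbove y b l) := by
  cases l with
  | nil =>
    simp only [isNEPathAbove_iff, List.isChain_singleton]
    aesop
  | cons y t =>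
    simp only [isNEPathAbove_iff, List.isChain_cons_cons, List.head?_cons,
      List.getLast?_cons_cons, List.forall_mem_cons, Option.some.injEq]
    aesop

lemma IsNEPathAbove.ne_nil (h : IsNEPathAbove a b l) : l ≠ [] := by
  rintro rfl
  simp [isNEPathAbove_iff] at h

lemma IsNEPathAbove.fst_le_snd (h : IsNEPathAbove a b l) : a.1 ≤ a.2 := by
  obtain ⟨x, t, rfl⟩ := List.exists_cons_of_ne_nil h.ne_nil
  exact (isNEPathAbove_cons.1 h).2.1

lemma IsNEPathAbove.add_length (h : IsNEPathAbove a b l) :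
    a.1 + a.2 + l.length = b.1 + b.2 + 1 := by
  induction l generalizing a with
  | nil => simp [isNEPathAbove_iff] at h
  | cons x t ih =>
    obtain ⟨-, -, ⟨rfl, rfl⟩ | ⟨y, hy, h'⟩⟩ := isNEPathAbove_cons.1 h
    · simp
    · have := ih h'
      rcases hy with rfl | rfl <;> simp only [List.length_cons, Nat.cast_succ] at this ⊢ <;> omega

lemma nePathsAbove_eq_empty_of_lt (h : b.1 + b.2 < a.1 + a.2) :
    nePathsAbove a b = ∅ :=
  Set.eq_empty_of_forall_notMem fun _ hl => by
    have := List.length_pos_of_ne_nil hl.ne_nil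
    have := IsNEPathAbove.add_length hl
    omega

lemma nePathsAbove_eq_empty_of_snd_lt_fst (h : a.2 < a.1) :
    nePathsAbove a b = ∅ :=
  Set.eq_empty_of_forall_notMem fun _ hl => absurd hl.fst_le_snd (not_le.2 h)

lemma nePathsAbove_of_add_eq (h : a.1 + a.2 = b.1 + b.2) :
    nePathsAbove a b = if b = a ∧ a.1 ≤ a.2 then {[a]} else ∅ := by
  ext l
  refine ⟨fun hl => ?_, fun hl => ?_⟩
  · obtain ⟨x, t, rfl⟩ := List.exists_cons_of_ne_nil hl.ne_nil
    have hlen := hl.add_length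
    obtain ⟨rfl, ha, ⟨rfl, rfl⟩ | ⟨y, -, ht⟩⟩ := isNEPathAbove_cons.1 hl
    · simp [ha]
    · have := List.length_pos_of_ne_nil ht.ne_nil
      simp only [List.length_cons] at hlen
      omega
  · split_ifs at hl with hab
    · obtain ⟨rfl, ha⟩ := hab
      obtain rfl := hl
      exact isNEPathAbove_cons.2 ⟨rfl, ha, .inl ⟨rfl, rfl⟩⟩
    · exact hl.elim

lemma nePathsAbove_eq_union (hab : a ≠ b) (ha : a.1 ≤ a.2) :
    nePathsAbove a b = List.cons a '' nePathsAbove (a.1 + 1, a.2) b ∪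
      List.cons a '' nePathsAbove (a.1, a.2 + 1) b := by
  ext l
  cases l with
  | nil => simp [nePathsAbove, isNEPathAbove_iff]
  | cons x t =>
    simp only [nePathsAbove, Set.mem_union, Set.mem_image, Set.mem_ofPred_eq, List.cons.injEq,
      isNEPathAbove_cons, NEStep, or_and_right, exists_or, exists_eq_left, Ne.symm hab]
    aesop

lemma nePathsAbove_finite (a b : ℤ × ℤ) : (nePathsAbove a b).Finite := by
  rcases lt_or_ge (b.1 + b.2) (a.1 + a.2) with hlt | hle
  · simp [nePathsAbove_eq_empty_of_lt hlt]
  obtain ⟨m, hm⟩ : ∃ m : ℕ, b.1 + b.2 = a.1 + a.2 + m :=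
    ⟨(b.1 + b.2 - a.1 - a.2).toNat, by omega⟩
  induction m generalizing a with
  | zero =>
    rw [nePathsAbove_of_add_eq (by omega)]
    split_ifs <;> simp
  | succ m ih =>
    rcases lt_or_ge a.2 a.1 with ha | ha
    · simp [nePathsAbove_eq_empty_of_snd_lt_fst ha]
    have hab : a ≠ b := by rintro rfl; omega
    rw [nePathsAbove_eq_union hab ha]
    exact ((ih (a := (a.1 + 1, a.2)) (by dsimp; omega) (by dsimp; omega)).image _).union
      ((ih (a := (a.1, a.2 + 1)) (by dsimp; omega) (by dsimp; omega)).image _)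

lemma latticeCount_eq_add (hab : a ≠ b) (ha : a.1 ≤ a.2) :
    latticeCount a b = latticeCount (a.1 + 1, a.2) b + latticeCount (a.1, a.2 + 1) b := by
  have hdisj : Disjoint (nePathsAbove (a.1 + 1, a.2) b) (nePathsAbove (a.1, a.2 + 1) b) := by
    refine Set.disjoint_left.2 fun l h₁ h₂ => ?_
    obtain ⟨x, t, rfl⟩ := List.exists_cons_of_ne_nil h₁.ne_nil
    have := (isNEPathAbove_cons.1 h₁).1.symm.trans (isNEPathAbove_cons.1 h₂).1
    simp [Prod.ext_iff] at this
  rw [latticeCount, ← nePathsAbove, nePathsAbove_eq_union hab ha, Set.ncard_union_eq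
      ((Set.disjoint_image_iff List.cons_injective).2 hdisj) ((nePathsAbove_finite _ _).image _)
      ((nePathsAbove_finite _ _).image _),
    Set.ncard_image_of_injective _ List.cons_injective,
    Set.ncard_image_of_injective _ List.cons_injective]
  rfl

end

lemma intChoose_eq_zero {n k : ℤ} (h : k < 0 ∨ n < k) : intChoose n k = 0 := by
  rw [intChoose, if_neg (by omega)]

lemma intChoose_natCast (n k : ℕ) : intChoose n k = n.choose k := by
  rcases le_or_gt k n with h | h
  · rw [intChoose, if_pos (by omega)]
    simp
  · rw [intChoose_eq_zero (by omega), Nat.choose_eq_zero_of_lt h]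

lemma intChoose_natCast_sub (n k : ℕ) : intChoose n (n - k) = n.choose k := by
  rcases le_or_gt k n with h | h
  · rw [← Nat.cast_sub h, intChoose_natCast, Nat.choose_symm h]
  · rw [intChoose_eq_zero (by omega), Nat.choose_eq_zero_of_lt h]

lemma intChoose_zero_left (k : ℤ) : intChoose 0 k = if k = 0 then 1 else 0 := by
  rcases eq_or_ne k 0 with rfl | hk
  · simp [intChoose]
  · rw [intChoose_eq_zero (by omega), if_neg hk]

lemma intChoose_succ (n : ℕ) (k : ℤ) :
    intChoose (n + 1 : ℕ) k = intChoose n (k - 1) + intChoose n k := by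
  rcases lt_trichotomy k 0 with hk | rfl | hk
  · rw [intChoose_eq_zero (.inl hk), intChoose_eq_zero (.inl hk),
      intChoose_eq_zero (.inl (by omega))]
  · simp [intChoose]; omega
  · obtain ⟨k, rfl⟩ : ∃ j : ℕ, k = j + 1 := ⟨(k - 1).toNat, by omega⟩
    rw [add_sub_cancel_right, ← Nat.cast_succ, intChoose_natCast, intChoose_natCast,
      intChoose_natCast, Nat.choose_succ_succ']

theorem latticeCount_eq_intChoose_sub {a b : ℤ × ℤ} {m : ℕ} (hm : b.1 + b.2 = a.1 + a.2 + m)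
    (ha : a.1 ≤ a.2 + 1) (hb : b.1 ≤ b.2 + 1) :
    (latticeCount a b : ℤ) = intChoose m (b.1 - a.1) - intChoose m (b.1 - a.2 - 1) := by
  induction m generalizing a with
  | zero =>
    rw [latticeCount, ← nePathsAbove, nePathsAbove_of_add_eq (by omega), Nat.cast_zero,
      intChoose_zero_left, intChoose_zero_left]
    simp only [Prod.ext_iff]
    split_ifs <;> simp <;> omega
  | succ m ih =>
    rcases lt_or_ge a.2 a.1 with ha' | ha'
    · rw [latticeCount, ← nePathsAbove, nePathsAbove_eq_empty_of_snd_lt_fst ha',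
        show b.1 - a.2 - 1 = b.1 - a.1 by omega]
      simp
    have hab : a ≠ b := by rintro rfl; omega
    rw [latticeCount_eq_add hab ha', Nat.cast_add,
      ih (a := (a.1 + 1, a.2)) (by dsimp; omega) (by dsimp; omega),
      ih (a := (a.1, a.2 + 1)) (by dsimp; omega) (by dsimp; omega),
      intChoose_succ, intChoose_succ]
    simp only [sub_add_eq_sub_sub]
    push_cast
    ring

/-- Type `Bₙ` digraph counting: if `X = (a,b)` is weakly above the diagonal and lies
strictly below the line of the diagonal points `(i, 2n−i)`, then the total number of
weakly-above-diagonal north-east lattice paths from `(a,b)` to the diagonal points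
`(i, 2n−i)`, `i = 0, …, n`, equals
`Σ_{i=a}^{min(n, 2n−b)} [C(2n−a−b, 2n−i−b) − C(2n−a−b, 2n−i−a+1)]`. -/
theorem stmt11 (n a b : ℕ) (hab : a ≤ b) (hbelow : a + b < 2 * n) :
    (∑ i ∈ Finset.range (n + 1),
        (latticeCount ((a : ℤ), (b : ℤ)) ((i : ℤ), 2 * (n : ℤ) - (i : ℤ)) : ℤ)) =
      ∑ i ∈ Finset.Icc a (min n (2 * n - b)),
        ((Nat.choose (2 * n - a - b) (2 * n - i - b) : ℤ) -
          (Nat.choose (2 * n - a - b) (2 * n - i - a + 1) : ℤ)) := by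
  have hcount : ∀ i ∈ Finset.range (n + 1),
      (latticeCount ((a : ℤ), (b : ℤ)) ((i : ℤ), 2 * (n : ℤ) - (i : ℤ)) : ℤ) =
        intChoose (2 * n - a - b : ℕ) (i - a) - intChoose (2 * n - a - b : ℕ) (i - b - 1) := by
    intro i hi
    rw [Finset.mem_range] at hi
    exact latticeCount_eq_intChoose_sub (by dsimp; omega) (by dsimp; omega) (by dsimp; omega)
  have hsub : Finset.Icc a (min n (2 * n - b)) ⊆ Finset.range (n + 1) := fun i hi => by
    simp only [Finset.mem_Icc, Finset.mem_range, le_min_iff] at hi ⊢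
    omega
  rw [Finset.sum_congr rfl hcount, ← Finset.sum_subset hsub fun i hi hi' => ?_]
  · refine Finset.sum_congr rfl fun i hi => ?_
    simp only [Finset.mem_Icc, le_min_iff] at hi
    rw [← intChoose_natCast_sub, ← intChoose_natCast_sub]
    congr 3 <;> omega
  · simp only [Finset.mem_Icc, Finset.mem_range, le_min_iff] at hi hi'
    rw [intChoose_eq_zero (by omega), intChoose_eq_zero (by omega), sub_self]
end

section
/- The number of north-east lattice paths from (a,b) to (c,d) staying weakly above the diagonal x = y and having exactly ℓ corners equals C(d−b, ℓ)·C(c−a, ℓ) − C(d−a−1, ℓ−1)·C(c−b+1, ℓ+1), assuming b ≥ a and d ≥ c. -/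
/-- The number of corners (an east step immediately followed by a north step)
of a north-east lattice path. -/
noncomputable def cornerCount (l : List (ℤ × ℤ)) : ℕ :=
  Set.ncard {p : ℤ × ℤ | [p, (p.1 + 1, p.2), (p.1 + 1, p.2 + 1)] <:+: l}

/-!
Induct on the distance `c + d - a - b`. A path leaving `(a, b) ≠ (c, d)` either starts with a
north step, followed by any path from `(a, b + 1)` with the same corners, or with an east step,
followed by a path from `(a + 1, b)` that gains a corner exactly when it continues north, and
paths from `(a + 1, b)` that start north are the paths from `(a + 1, b + 1)`. So for `a < b` the
counts satisfy `N(a,b,k) + N(a+1,b+1,k) = N(a,b+1,k) + N(a+1,b,k) + N(a+1,b+1,k-1)`, while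
from the diagonal only the north step is possible. By Pascal's rule the binomial expression obeys
the same recurrences and the same boundary values.
-/

lemma intChoose_of_lt {n k : ℤ} (h : n < k) : intChoose n k = 0 := by
  rw [intChoose, if_neg (by omega)]

lemma intChoose_of_neg (n : ℤ) {k : ℤ} (h : k < 0) : intChoose n k = 0 := by
  rw [intChoose, if_neg (by omega)]

lemma intChoose_of_nonneg {n k : ℤ} (hn : 0 ≤ n) (hk : 0 ≤ k) :
    intChoose n k = n.toNat.choose k.toNat := by
  unfold intChoose
  split_ifs with h
  · rfl
  · exact (Nat.choose_eq_zero_of_lt (by omega)).symm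

lemma intChoose_pascal {n k : ℤ} (h : n ≠ 0 ∨ k ≠ 0) :
    intChoose n k = intChoose (n - 1) k + intChoose (n - 1) (k - 1) := by
  rcases lt_or_ge n 1 with hn | hn
  · unfold intChoose
    split_ifs <;> omega
  rcases lt_trichotomy k 0 with hk | rfl | hk
  · simp [intChoose_of_neg _ hk, intChoose_of_neg _ (show k - 1 < 0 by omega)]
  · rw [intChoose_of_nonneg (by omega) le_rfl, intChoose_of_nonneg (by omega) le_rfl,
      intChoose_of_neg _ (by omega)]
    simp
  rw [intChoose_of_nonneg (by omega) (by omega), intChoose_of_nonneg (by omega) (by omega),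
    intChoose_of_nonneg (by omega) (by omega), show n.toNat = (n - 1).toNat + 1 by omega,
    show k.toNat = (k - 1).toNat + 1 by omega, Nat.choose_succ_succ, add_comm]

lemma intChoose_zero_right (n : ℤ) : intChoose n 0 = if 0 ≤ n then 1 else 0 := by
  simp [intChoose]

def cornerPathFormula (a b c d k : ℤ) : ℤ :=
  intChoose (d - b) k * intChoose (c - a) k -
    intChoose (d - a - 1) (k - 1) * intChoose (c - b + 1) (k + 1)

lemma cornerPathFormula_of_neg (a b c d : ℤ) {k : ℤ} (hk : k < 0) :
    cornerPathFormula a b c d k = 0 := by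
  simp [cornerPathFormula, intChoose_of_neg _ hk, intChoose_of_neg _ (show k - 1 < 0 by omega)]

lemma cornerPathFormula_zero (a b c d : ℤ) :
    cornerPathFormula a b c d 0 = if a ≤ c ∧ b ≤ d then 1 else 0 := by
  rw [cornerPathFormula, intChoose_zero_right, intChoose_zero_right,
    intChoose_of_neg _ (show (0 : ℤ) - 1 < 0 by norm_num)]
  by_cases hac : a ≤ c <;> by_cases hbd : b ≤ d <;> simp [hac, hbd]

lemma cornerPathFormula_eq_zero {a b c d : ℤ} (k : ℤ) (hab : a ≤ b) (hcd : c ≤ d)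
    (h : c < a ∨ d < b) : cornerPathFormula a b c d k = 0 := by
  rcases lt_or_ge k 0 with hk | hk
  · exact cornerPathFormula_of_neg a b c d hk
  have hv : intChoose (c - b + 1) (k + 1) = 0 := intChoose_of_lt (by omega)
  rcases h with h | h
  · simp [cornerPathFormula, hv, intChoose_of_lt (show c - a < k by omega)]
  · simp [cornerPathFormula, hv, intChoose_of_lt (show d - b < k by omega)]

lemma cornerPathFormula_self {a b : ℤ} (k : ℤ) (hab : a ≤ b) :
    cornerPathFormula a b a b k = if k = 0 then 1 else 0 := by
  rcases lt_trichotomy k 0 with hk | rfl | hk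
  · simp [cornerPathFormula_of_neg a b a b hk, hk.ne]
  · simp [cornerPathFormula_zero]
  · simp [cornerPathFormula, intChoose_of_lt hk, intChoose_of_lt (show a - b + 1 < k + 1 by omega),
      hk.ne']

lemma cornerPathFormula_diag_step {a c d : ℤ} (k : ℤ) (hcd : c ≤ d) (hne : ¬(c = a ∧ d = a)) :
    cornerPathFormula a a c d k = cornerPathFormula a (a + 1) c d k := by
  rcases lt_or_ge k 0 with hk | hk
  · rw [cornerPathFormula_of_neg _ _ _ _ hk, cornerPathFormula_of_neg _ _ _ _ hk]
  have hv := intChoose_pascal (n := c - a + 1) (k := k + 1) (by omega)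
  unfold cornerPathFormula
  by_cases hda : d = a ∧ k = 0
  · rw [intChoose_of_lt (show c - a < k by omega), intChoose_of_neg _ (show k - 1 < 0 by omega)]
    simp
  · rw [hv, intChoose_pascal (n := d - a) (k := k) (by omega)]
    push_cast
    ring_nf

lemma cornerPathFormula_step {a b c d : ℤ} (k : ℤ) (hab : a < b) (hcd : c ≤ d)
    (hne : ¬(c = a ∧ d = b)) :
    cornerPathFormula a b c d k + cornerPathFormula (a + 1) (b + 1) c d k =
      cornerPathFormula a (b + 1) c d k + cornerPathFormula (a + 1) b c d k +
        cornerPathFormula (a + 1) (b + 1) c d (k - 1) := by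
  rcases lt_trichotomy k 0 with hk | rfl | hk
  · simp only [cornerPathFormula_of_neg _ _ _ _ hk,
      cornerPathFormula_of_neg _ _ _ _ (show k - 1 < 0 by omega), add_zero]
  · rw [cornerPathFormula_zero, cornerPathFormula_zero, cornerPathFormula_zero,
      cornerPathFormula_zero, cornerPathFormula_of_neg _ _ _ _ (by norm_num)]
    split_ifs <;> omega
  have hx := intChoose_pascal (n := d - b) (k := k) (by omega)
  have hy := intChoose_pascal (n := c - a) (k := k) (by omega)
  have hv := intChoose_pascal (n := c - b + 1) (k := k + 1) (by omega)
  unfold cornerPathFormula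
  by_cases hdk : d = a + 1 ∧ k = 1
  · -- Pascal's rule fails for `intChoose 0 0` here, but `c ≤ d ≤ b` kills every factor
    -- `intChoose (c - b + ·) ·`.
    obtain ⟨rfl, rfl⟩ := hdk
    rw [hx, hy, intChoose_of_lt (show c - b + 1 < 1 + 1 by omega),
      intChoose_of_lt (show c - (b + 1) + 1 < 1 + 1 by omega),
      intChoose_of_lt (show c - (b + 1) + 1 < 1 - 1 + 1 by omega)]
    push_cast
    ring_nf
  · have hu := intChoose_pascal (n := d - a - 1) (k := k - 1) (by omega)
    rw [hx, hy, hv, hu]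
    push_cast
    ring_nf

lemma NEStep.lt {p q : ℤ × ℤ} (h : NEStep p q) : p < q := by
  rcases h with rfl | rfl <;> simp [Prod.lt_iff]

namespace IsNEPathAbove

variable {p q : ℤ × ℤ} {l : List (ℤ × ℤ)}

lemma pairwise_lt (h : IsNEPathAbove p q l) : l.Pairwise (· < ·) :=
  List.isChain_iff_pairwise.mp (h.2.2.1.imp fun _ _ => NEStep.lt)

lemma exists_eq_cons (h : IsNEPathAbove p q l) : ∃ t, l = p :: t :=
  List.head?_eq_some_iff.mp h.1

lemma mem_Icc (h : IsNEPathAbove p q l) {x : ℤ × ℤ} (hx : x ∈ l) : x ∈ Set.Icc p q := by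
  have hpw := h.pairwise_lt
  obtain ⟨t, rfl⟩ := h.exists_eq_cons
  obtain ⟨s, hs⟩ := List.getLast?_eq_some_iff.mp h.2.1
  refine ⟨?_, ?_⟩
  · rcases List.mem_cons.mp hx with rfl | hx
    · exact le_rfl
    · exact ((List.pairwise_cons.mp hpw).1 x hx).le
  · rw [hs] at hx hpw
    rcases List.mem_append.mp hx with hx | hx
    · exact ((List.pairwise_append.mp hpw).2.2 x hx q (List.mem_singleton_self q)).le
    · exact (List.mem_singleton.mp hx).le

lemma fst_le_snd_s15 (h : IsNEPathAbove p q l) : p.1 ≤ p.2 := by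
  obtain ⟨t, rfl⟩ := h.exists_eq_cons
  exact h.2.2.2 p List.mem_cons_self

lemma le (h : IsNEPathAbove p q l) : p ≤ q := by
  obtain ⟨t, rfl⟩ := h.exists_eq_cons
  exact (h.mem_Icc List.mem_cons_self).2

lemma eq_singleton (h : IsNEPathAbove p p l) : l = [p] := by
  have hpw := h.pairwise_lt
  obtain ⟨t, rfl⟩ := h.exists_eq_cons
  cases t with
  | nil => rfl
  | cons r t =>
    have hpr : p < r := (List.pairwise_cons.mp hpw).1 r List.mem_cons_self
    exact absurd (h.mem_Icc (List.mem_cons_of_mem _ List.mem_cons_self)).2 hpr.not_ge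

end IsNEPathAbove

-- A path is strictly increasing, so it is determined by its set of points, a subset of `Icc p q`.
lemma finite_setOf_isNEPathAbove (p q : ℤ × ℤ) : {l | IsNEPathAbove p q l}.Finite := by
  refine (Set.finite_Icc p q).finite_subsets.of_injOn (f := fun l => {x | x ∈ l})
    (fun l hl => show {x | x ∈ l} ⊆ _ from fun _ hx => hl.mem_Icc hx) fun l₁ h₁ l₂ h₂ h => ?_
  exact h₁.pairwise_lt.eq_of_mem_iff h₂.pairwise_lt fun x => Set.ext_iff.mp h x

lemma isNEPathAbove_cons_cons {p q r : ℤ × ℤ} {t : List (ℤ × ℤ)} :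
    IsNEPathAbove p q (p :: r :: t) ↔ p.1 ≤ p.2 ∧ NEStep p r ∧ IsNEPathAbove r q (r :: t) := by
  simp only [IsNEPathAbove, List.head?_cons, List.getLast?_cons_cons, List.forall_mem_cons,
    true_and]
  constructor
  · rintro ⟨hq, hc, hp, hr⟩
    exact ⟨hp, (List.isChain_cons_cons.mp hc).1, hq, (List.isChain_cons_cons.mp hc).2, hr⟩
  · rintro ⟨hp, hpr, hq, hc, hr⟩
    exact ⟨hq, List.isChain_cons_cons.mpr ⟨hpr, hc⟩, hp, hr⟩

lemma cornerCount_singleton (p : ℤ × ℤ) : cornerCount [p] = 0 := by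
  have h : {x : ℤ × ℤ | [x, (x.1 + 1, x.2), (x.1 + 1, x.2 + 1)] <:+: [p]} = ∅ :=
    Set.eq_empty_of_forall_notMem fun x hx => by simpa using (show _ <:+: [p] from hx).length_le
  rw [cornerCount, h, Set.ncard_empty]

lemma cornerCount_cons {p : ℤ × ℤ} {t : List (ℤ × ℤ)} (hp : p ∉ t) :
    cornerCount (p :: t) =
      cornerCount t + if [(p.1 + 1, p.2), (p.1 + 1, p.2 + 1)] <+: t then 1 else 0 := by
  set S := {x : ℤ × ℤ | [x, (x.1 + 1, x.2), (x.1 + 1, x.2 + 1)] <:+: t}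
  have hS : S ⊆ {x | x ∈ t} := fun x hx => hx.subset List.mem_cons_self
  have hcons : {x : ℤ × ℤ | [x, (x.1 + 1, x.2), (x.1 + 1, x.2 + 1)] <:+: p :: t} =
      {x | x = p ∧ [(x.1 + 1, x.2), (x.1 + 1, x.2 + 1)] <+: t} ∪ S := by
    ext x
    simp only [Set.mem_ofPred_eq, Set.mem_union, List.infix_cons_iff, List.cons_prefix_cons, S]
  unfold cornerCount
  rw [hcons]
  split_ifs with h
  · rw [show {x | x = p ∧ _} = {p} by ext; simp +contextual [h], Set.singleton_union]
    exact Set.ncard_insert_of_notMem (fun hpS => hp (hS hpS)) ((List.finite_toSet t).subset hS)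
  · rw [show {x | x = p ∧ _} = ∅ by ext; simp +contextual [h], Set.empty_union]
    rfl

-- Indexed by `k : ℤ` so that `k - 1` below does not truncate at `0`.
def cornerPaths (p q : ℤ × ℤ) (k : ℤ) : Set (List (ℤ × ℤ)) :=
  {l | IsNEPathAbove p q l ∧ (cornerCount l : ℤ) = k}

lemma cornerPaths_finite (p q : ℤ × ℤ) (k : ℤ) : (cornerPaths p q k).Finite :=
  (finite_setOf_isNEPathAbove p q).subset fun _ hl => hl.1

lemma cons_cons_mem_cornerPaths {p q r : ℤ × ℤ} {t : List (ℤ × ℤ)} {k : ℤ} (hpr : NEStep p r) :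
    p :: r :: t ∈ cornerPaths p q k ↔ p.1 ≤ p.2 ∧
      r :: t ∈ cornerPaths r q
        (k - if [(p.1 + 1, p.2), (p.1 + 1, p.2 + 1)] <+: r :: t then 1 else 0) := by
  simp only [cornerPaths, Set.mem_ofPred_eq, isNEPathAbove_cons_cons, hpr, true_and, and_assoc]
  refine and_congr_right fun hp => and_congr_right fun hr => ?_
  have hpt : p ∉ r :: t := fun hmem => (hpr.lt.trans_le (hr.mem_Icc hmem).1).false
  rw [cornerCount_cons hpt]
  push_cast
  constructor <;> intro h <;> linarith

section FirstStep

variable {a b : ℤ} {q : ℤ × ℤ} {k : ℤ}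

lemma cornerPaths_sep_north (hab : a ≤ b) :
    {l ∈ cornerPaths (a, b) q k | l[1]? = some (a, b + 1)} =
      List.cons (a, b) '' cornerPaths (a, b + 1) q k := by
  ext l
  constructor
  · rintro ⟨hl, h1⟩
    obtain ⟨_ | ⟨r, t⟩, rfl⟩ := hl.1.exists_eq_cons
    · simp at h1
    obtain rfl : r = (a, b + 1) := by simpa using h1
    rw [cons_cons_mem_cornerPaths (Or.inr rfl)] at hl
    exact ⟨_, by simpa [List.cons_prefix_cons] using hl.2, rfl⟩
  · rintro ⟨t, ht, rfl⟩
    obtain ⟨t, rfl⟩ := ht.1.exists_eq_cons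
    refine ⟨(cons_cons_mem_cornerPaths (Or.inr rfl)).mpr ⟨hab, ?_⟩, rfl⟩
    simpa [List.cons_prefix_cons] using ht

lemma cornerPaths_sep_east :
    {l ∈ cornerPaths (a, b) q k | l[1]? = some (a + 1, b)} =
      List.cons (a, b) '' ({t ∈ cornerPaths (a + 1, b) q k | t[1]? ≠ some (a + 1, b + 1)} ∪
        {t ∈ cornerPaths (a + 1, b) q (k - 1) | t[1]? = some (a + 1, b + 1)}) := by
  ext l
  constructor
  · rintro ⟨hl, h1⟩
    obtain ⟨_ | ⟨r, t⟩, rfl⟩ := hl.1.exists_eq_cons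
    · simp at h1
    obtain rfl : r = (a + 1, b) := by simpa using h1
    rw [cons_cons_mem_cornerPaths (Or.inl rfl)] at hl
    simp only [List.cons_prefix_cons, true_and, List.singleton_prefix_iff_head?_eq_some,
      List.head?_eq_getElem?] at hl
    refine ⟨_, ?_, rfl⟩
    by_cases hc : t[0]? = some (a + 1, b + 1)
    · exact Or.inr ⟨by simpa [hc] using hl.2, by simpa using hc⟩
    · exact Or.inl ⟨by simpa [hc] using hl.2, by simpa using hc⟩
  · rintro ⟨t, ht, rfl⟩
    obtain ⟨t, rfl⟩ : ∃ t', t = (a + 1, b) :: t' := by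
      rcases ht with h | h <;> exact h.1.1.exists_eq_cons
    refine ⟨(cons_cons_mem_cornerPaths (Or.inl rfl)).mpr ⟨?_, ?_⟩, rfl⟩
    · rcases ht with h | h <;> linarith [h.1.1.fst_le_snd_s15]
    · simp only [List.cons_prefix_cons, true_and, List.singleton_prefix_iff_head?_eq_some,
        List.head?_eq_getElem?]
      rcases ht with ⟨h, hc⟩ | ⟨h, hc⟩
      · simpa [show t[0]? ≠ some (a + 1, b + 1) by simpa using hc] using h
      · simpa [show t[0]? = some (a + 1, b + 1) by simpa using hc] using h

lemma cornerPaths_sep_not_north (hq : (a, b) ≠ q) :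
    {l ∈ cornerPaths (a, b) q k | l[1]? ≠ some (a, b + 1)} =
      {l ∈ cornerPaths (a, b) q k | l[1]? = some (a + 1, b)} := by
  refine Set.sep_ext_iff.mpr fun l hl => ?_
  obtain ⟨_ | ⟨r, t⟩, rfl⟩ := hl.1.exists_eq_cons
  · exact absurd (Option.some.inj hl.1.2.1) hq
  rcases (isNEPathAbove_cons_cons.mp hl.1).2.1 with rfl | rfl <;> simp

lemma ncard_cornerPaths_sep_north (hab : a ≤ b) :
    {l ∈ cornerPaths (a, b) q k | l[1]? = some (a, b + 1)}.ncard =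
      (cornerPaths (a, b + 1) q k).ncard := by
  rw [cornerPaths_sep_north hab, Set.ncard_image_of_injective _ List.cons_injective]

lemma ncard_cornerPaths_eq_add (hab : a ≤ b) (hq : (a, b) ≠ q) :
    (cornerPaths (a, b) q k).ncard = (cornerPaths (a, b + 1) q k).ncard +
      {l ∈ cornerPaths (a, b) q k | l[1]? = some (a + 1, b)}.ncard := by
  rw [← ncard_cornerPaths_sep_north hab, ← cornerPaths_sep_not_north hq]
  exact (Set.ncard_inter_add_ncard_sdiff_eq_ncard _ _ (cornerPaths_finite _ _ _)).symm

lemma ncard_cornerPaths_diag (hq : (a, a) ≠ q) :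
    (cornerPaths (a, a) q k).ncard = (cornerPaths (a, a + 1) q k).ncard := by
  have heast : {l ∈ cornerPaths (a, a) q k | l[1]? = some (a + 1, a)} = ∅ :=
    Set.eq_empty_of_forall_notMem fun l ⟨hl, h1⟩ =>
      absurd (hl.1.2.2.2 _ (List.mem_of_getElem? h1)) (by simp)
  rw [ncard_cornerPaths_eq_add le_rfl hq, heast, Set.ncard_empty, add_zero]

lemma ncard_cornerPaths_add (hab : a < b) (hq : (a, b) ≠ q) :
    (cornerPaths (a, b) q k).ncard + (cornerPaths (a + 1, b + 1) q k).ncard =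
      (cornerPaths (a, b + 1) q k).ncard + (cornerPaths (a + 1, b) q k).ncard +
        (cornerPaths (a + 1, b + 1) q (k - 1)).ncard := by
  have heast : {l ∈ cornerPaths (a, b) q k | l[1]? = some (a + 1, b)}.ncard =
      {t ∈ cornerPaths (a + 1, b) q k | t[1]? ≠ some (a + 1, b + 1)}.ncard +
        (cornerPaths (a + 1, b + 1) q (k - 1)).ncard := by
    rw [cornerPaths_sep_east, Set.ncard_image_of_injective _ List.cons_injective,
      Set.ncard_union_eq ?_ ((cornerPaths_finite _ _ _).sep _) ((cornerPaths_finite _ _ _).sep _),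
      ncard_cornerPaths_sep_north (by omega)]
    exact Set.disjoint_left.mpr fun _ h₁ h₂ => h₁.2 h₂.2
  have hsplit : {t ∈ cornerPaths (a + 1, b) q k | t[1]? = some (a + 1, b + 1)}.ncard +
      {t ∈ cornerPaths (a + 1, b) q k | t[1]? ≠ some (a + 1, b + 1)}.ncard =
        (cornerPaths (a + 1, b) q k).ncard :=
    Set.ncard_inter_add_ncard_sdiff_eq_ncard _ _ (cornerPaths_finite _ _ _)
  rw [ncard_cornerPaths_sep_north (by omega)] at hsplit
  rw [ncard_cornerPaths_eq_add hab.le hq, heast]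
  omega

end FirstStep

lemma ncard_cornerPaths_self {p : ℤ × ℤ} (hp : p.1 ≤ p.2) (k : ℤ) :
    ((cornerPaths p p k).ncard : ℤ) = if k = 0 then 1 else 0 := by
  have hC : cornerPaths p p k = if k = 0 then {[p]} else ∅ := by
    ext l
    constructor
    · rintro ⟨hl, hk⟩
      obtain rfl := hl.eq_singleton
      simp [← hk, cornerCount_singleton]
    · split_ifs with hk
      · rintro rfl
        exact ⟨⟨rfl, rfl, List.isChain_singleton _, by simpa⟩, by simp [hk, cornerCount_singleton]⟩
      · exact False.elim
  split_ifs at hC ⊢ <;> simp [hC]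

lemma cornerPaths_eq_empty {p q : ℤ × ℤ} (h : ¬p ≤ q) (k : ℤ) : cornerPaths p q k = ∅ :=
  Set.eq_empty_of_forall_notMem fun _ hl => h hl.1.le

theorem ncard_cornerPaths {a b c d : ℤ} (k : ℤ) (hab : a ≤ b) (hcd : c ≤ d) :
    ((cornerPaths (a, b) (c, d) k).ncard : ℤ) = cornerPathFormula a b c d k := by
  induction hn : (c + d - a - b).toNat using Nat.strong_induction_on generalizing a b k with
  | _ n ih =>
    by_cases hle : a ≤ c ∧ b ≤ d
    swap
    · rw [cornerPaths_eq_empty (by simpa [Prod.mk_le_mk] using hle),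
        cornerPathFormula_eq_zero k hab hcd (by omega), Set.ncard_empty, Nat.cast_zero]
    by_cases hq : (a, b) = (c, d)
    · obtain ⟨rfl, rfl⟩ := Prod.mk.inj hq
      rw [ncard_cornerPaths_self hab, cornerPathFormula_self k hab]
    have hne : ¬(c = a ∧ d = b) := fun h => hq (by rw [h.1, h.2])
    rcases hab.eq_or_lt with rfl | hab
    · rw [ncard_cornerPaths_diag hq, ih _ (by omega) k (by omega) rfl,
        cornerPathFormula_diag_step k hcd (by omega)]
    · have hcount := ncard_cornerPaths_add (k := k) hab hq
      have h₁ := ih _ (by omega) k (show a ≤ b + 1 by omega) rfl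
      have h₂ := ih _ (by omega) k (show a + 1 ≤ b by omega) rfl
      have h₃ := ih _ (by omega) k (show a + 1 ≤ b + 1 by omega) rfl
      have h₄ := ih _ (by omega) (k - 1) (show a + 1 ≤ b + 1 by omega) rfl
      have hformula := cornerPathFormula_step k hab hcd hne
      zify at hcount
      linarith

/-- Krattenthaler's corner-counting formula: the number of north-east lattice paths
from `(a,b)` to `(c,d)` weakly above the diagonal `x = y` with exactly `ℓ` corners is
`C(d−b, ℓ)·C(c−a, ℓ) − C(d−a−1, ℓ−1)·C(c−b+1, ℓ+1)`, assuming `b ≥ a` and `d ≥ c`. -/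
theorem stmt15 (a b c d : ℤ) (ℓ : ℕ) (hab : a ≤ b) (hcd : c ≤ d) :
    (Set.ncard {l : List (ℤ × ℤ) | IsNEPathAbove (a, b) (c, d) l ∧ cornerCount l = ℓ} : ℤ) =
      (intChoose (d - b) (ℓ : ℤ) : ℤ) * (intChoose (c - a) (ℓ : ℤ) : ℤ) -
        (intChoose (d - a - 1) ((ℓ : ℤ) - 1) : ℤ) * (intChoose (c - b + 1) ((ℓ : ℤ) + 1) : ℤ) := by
  simpa [cornerPaths, cornerPathFormula] using ncard_cornerPaths (ℓ : ℤ) hab hcd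
end
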